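/- arXiv:2209.15028 — 2 statements merged into one kernel-verified Lean document; each statement's English description precedes it below -/
import Mathlib

section
/- Let S ⊆ S^{k-1} be a Borel set of full standard spherical measure. Then there exist finitely many directions θ(1), …, θ(F) ∈ S such that |x|² ≤ 2 max_{i=1,…,F} |θ(i)ᵀ x|² for all x ∈ ℝᵏ. -/
open MeasureTheory ProbabilityTheory Metric Filter
open scoped ENNReal NNReal RealInnerProductSpace Topology

noncomputable section

/-- Euclidean space `ℝᵏ`. -/
abbrev Eucl (k : ℕ) := EuclideanSpace ℝ (Fin k)

/-- A measure belongs to `P₂` if it is a Borel probability measure with finite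
second moment. -/
def MemP2 {E : Type*} [NormedAddCommGroup E] [MeasurableSpace E] (μ : Measure E) : Prop :=
  IsProbabilityMeasure μ ∧ ∫⁻ x, (‖x‖₊ : ℝ≥0∞) ^ 2 ∂μ < ∞

/-- The set of couplings of `μ` and `ν`. -/
def couplings {E : Type*} [MeasurableSpace E] (μ ν : Measure E) : Set (Measure (E × E)) :=
  {π | π.map Prod.fst = μ ∧ π.map Prod.snd = ν}

/-- Squared 2-Wasserstein distance (with cost `½|x-y|²`), valued in `ℝ≥0∞`. -/
noncomputable def W2sq {E : Type*} [NormedAddCommGroup E] [MeasurableSpace E]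
    (μ ν : Measure E) : ℝ≥0∞ :=
  ⨅ (π : Measure (E × E)) (_ : π ∈ couplings μ ν),
    ∫⁻ p, ENNReal.ofReal (‖p.1 - p.2‖ ^ 2 / 2) ∂π

/-- The 2-Wasserstein distance. -/
noncomputable def W2 {E : Type*} [NormedAddCommGroup E] [MeasurableSpace E]
    (μ ν : Measure E) : ℝ :=
  Real.sqrt (W2sq μ ν).toReal

/-- The projection `μ_θ = P_θ ♯ μ` of a measure on `ℝᵏ` to `ℝ`, `P_θ(x) = θᵀ x`. -/
noncomputable def projM {k : ℕ} (θ : Eucl k) (μ : Measure (Eucl k)) : Measure ℝ :=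
  μ.map fun x => ⟪θ, x⟫

/-- The standard (uniform, normalized) spherical measure on the unit sphere `S^{k-1}`. -/
noncomputable def sphM (k : ℕ) : Measure (sphere (0 : Eucl k) 1) :=
  ((volume : Measure (Eucl k)).toSphere Set.univ)⁻¹ • (volume : Measure (Eucl k)).toSphere

/-- Squared sliced Wasserstein distance. -/
noncomputable def SW2sq {k : ℕ} (μ ν : Measure (Eucl k)) : ℝ≥0∞ :=
  ∫⁻ θ : sphere (0 : Eucl k) 1, W2sq (projM (θ : Eucl k) μ) (projM (θ : Eucl k) ν) ∂(sphM k)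

/-- Sliced Wasserstein distance. -/
noncomputable def SW2 {k : ℕ} (μ ν : Measure (Eucl k)) : ℝ :=
  Real.sqrt (SW2sq μ ν).toReal

/-- One-dimensional centered Gaussian with variance `σ²` (Dirac mass at `0` if `σ = 0`). -/
noncomputable def gauss1 (σ : ℝ) : Measure ℝ := gaussianReal 0 (Real.toNNReal (σ ^ 2))

/-- Centered Gaussian on `ℝᵏ` with covariance `σ² Iₖ`. -/
noncomputable def gaussK (k : ℕ) (σ : ℝ) : Measure (Eucl k) :=
  (Measure.pi fun _ : Fin k => gauss1 σ).map (MeasurableEquiv.toLp 2 (Fin k → ℝ))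

/-- Gaussian regularization `μ^σ = μ ∗ N_σ`. -/
noncomputable def greg {k : ℕ} (σ : ℝ) (μ : Measure (Eucl k)) : Measure (Eucl k) :=
  μ.conv (gaussK k σ)

/-- Squared Gaussian-regularized sliced Wasserstein distance. -/
noncomputable def SW2sqσ {k : ℕ} (σ : ℝ) (μ ν : Measure (Eucl k)) : ℝ≥0∞ :=
  SW2sq (greg σ μ) (greg σ ν)

/-- Gaussian regularized sliced Wasserstein distance `SW₂^σ`. -/
noncomputable def SW2σ {k : ℕ} (σ : ℝ) (μ ν : Measure (Eucl k)) : ℝ :=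
  Real.sqrt (SW2sqσ σ μ ν).toReal

/-- Quantile function (generalized inverse cumulative distribution function). -/
noncomputable def qf (ρ : Measure ℝ) (p : ℝ) : ℝ := sInf {y | p ≤ cdf ρ y}

/-- The one-dimensional monotone (optimal) transport map `T = F_β⁻¹ ∘ F_α` from `α` to `β`. -/
noncomputable def Tmap (α β : Measure ℝ) (x : ℝ) : ℝ := qf β (cdf α x)

/-- The monotone transport map `T^σ_θ` from `μ^σ_θ` to `ν^σ_θ`. -/
noncomputable def Tσθ {k : ℕ} (σ : ℝ) (θ : Eucl k) (μ ν : Measure (Eucl k)) : ℝ → ℝ :=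
  Tmap (projM θ (greg σ μ)) (projM θ (greg σ ν))

/-- The space `P₂(ℝᵏ)` of probability measures with finite second moment. -/
def P2 (k : ℕ) : Type := {μ : Measure (Eucl k) // MemP2 μ}

/-- The canonical atomless probability space used for liftings: `ℝ` with the
standard Gaussian measure. -/
noncomputable def PP : Measure ℝ := gaussianReal 0 1

/-- `u : P₂(ℝᵏ) → ℝ` is `L`-differentiable at `μ` with `L`-derivative `g : ℝᵏ → ℝᵏ`
if its lifting `U(X) := u(law X)` to the `L²` space of an atomless probability space is
Fréchet differentiable at some `X` with law `μ`, with derivative `Y ↦ E[⟪g(X), Y⟫]`. -/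
def HasLDerivAt (k : ℕ) (u : Measure (Eucl k) → ℝ) (μ : Measure (Eucl k))
    (g : Eucl k → Eucl k) : Prop :=
  ∃ X : Lp (Eucl k) 2 PP, Measure.map X PP = μ ∧
    ∃ D : Lp (Eucl k) 2 PP →L[ℝ] ℝ,
      (∀ Y : Lp (Eucl k) 2 PP, D Y = ∫ ω, ⟪g (X ω), Y ω⟫ ∂PP) ∧
      HasFDerivAt (fun Y : Lp (Eucl k) 2 PP => u (Measure.map Y PP)) D X

/-- The `L`-derivative `D_μ SW₂^σ(μ,ν)²(x) = ∫_{S^{k-1}} θ (θᵀx − E[T^σ_θ(θᵀ(x+N_σ))]) dθ`. -/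
noncomputable def DSW (k : ℕ) (σ : ℝ) (μ ν : Measure (Eucl k)) (x : Eucl k) : Eucl k :=
  ∫ θ : sphere (0 : Eucl k) 1,
    ((⟪(θ : Eucl k), x⟫ -
        ∫ z : Eucl k, Tσθ σ (θ : Eucl k) μ ν ⟪(θ : Eucl k), x + z⟫ ∂(gaussK k σ)) •
      (θ : Eucl k)) ∂(sphM k)

/-- The mixed second derivative
`D²_{xμ} SW₂^σ(μ,ν)²(x) = E ∫_{S^{k-1}} θθᵀ (1 − (T^σ_θ)'(θᵀ(x+N_σ))) dθ`, applied to a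
vector `v`. -/
noncomputable def DSW2 (k : ℕ) (σ : ℝ) (μ ν : Measure (Eucl k)) (x v : Eucl k) : Eucl k :=
  ∫ z : Eucl k,
    (∫ θ : sphere (0 : Eucl k) 1,
      (((1 - deriv (Tσθ σ (θ : Eucl k) μ ν) ⟪(θ : Eucl k), x + z⟫) * ⟪(θ : Eucl k), v⟫) •
        (θ : Eucl k)) ∂(sphM k)) ∂(gaussK k σ)

/-- The gauge-type function `ρ_σ((s,μ),(t,ν)) = |t−s|² + SW₂^σ(μ,ν)²`. -/
noncomputable def gaugeρ {k : ℕ} (σ : ℝ) (p q : ℝ × Measure (Eucl k)) : ℝ :=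
  |q.1 - p.1| ^ 2 + (SW2sqσ σ p.2 q.2).toReal

/-- The smooth perturbation `φ_δ(t,μ) = ∑ₙ 2⁻ⁿ ρ_{1/δ}((t,μ),(tₙ,μₙ))`. -/
noncomputable def phiδ {k : ℕ} (δ : ℝ) (seq : ℕ → ℝ × Measure (Eucl k))
    (p : ℝ × Measure (Eucl k)) : ℝ :=
  ∑' n : ℕ, ((2 : ℝ) ^ n)⁻¹ * gaugeρ (1 / δ) p (seq n)

/-!
A set of full spherical measure is dense, because the spherical measure charges every nonempty
open set. By compactness of the sphere, finitely many of its points form a `1/2`-net. For unit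
vectors `θ, u` one has `⟪θ, u⟫ = 1 - ‖θ - u‖² / 2`, so a net point within `1/2` of `x / ‖x‖`
satisfies `⟪θ, x⟫² ≥ (7/8)² ‖x‖² ≥ ‖x‖² / 2`.
-/

open Set

instance sphM.instIsOpenPosMeasure (k : ℕ) : (sphM k).IsOpenPosMeasure :=
  Measure.isOpenPosMeasure_smul _ (ENNReal.inv_ne_zero.2 (measure_ne_top _ _))

theorem Dense.exists_finite_subset_forall_exists_dist_lt {X : Type*} [PseudoMetricSpace X]
    [CompactSpace X] {S : Set X} (hS : Dense S) {ε : ℝ} (hε : 0 < ε) :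
    ∃ t ⊆ S, t.Finite ∧ ∀ x, ∃ y ∈ t, dist x y < ε := by
  obtain ⟨t, htS, htfin, hcover⟩ := isCompact_univ.elim_finite_subcover_image
    (b := S) (c := fun y => ball y ε) (fun _ _ => isOpen_ball) fun x _ => by
      obtain ⟨y, hyS, hxy⟩ := hS.exists_dist_lt x hε
      exact mem_biUnion hyS hxy
  refine ⟨t, htS, htfin, fun x => ?_⟩
  obtain ⟨y, hyt, hxy⟩ := mem_iUnion₂.1 (hcover (mem_univ x))
  exact ⟨y, hyt, hxy⟩

section InnerProductSpace

variable {E : Type*} [NormedAddCommGroup E] [InnerProductSpace ℝ E]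

theorem inner_eq_one_sub_dist_sq_div_two {θ u : E} (hθ : ‖θ‖ = 1) (hu : ‖u‖ = 1) :
    ⟪θ, u⟫ = 1 - dist θ u ^ 2 / 2 := by
  rw [dist_eq_norm, norm_sub_sq_real, hθ, hu]
  ring

theorem one_half_le_inner_sq_of_dist_le {θ u : E} (hθ : ‖θ‖ = 1) (hu : ‖u‖ = 1)
    (hdist : dist θ u ≤ 1 / 2) : 1 / 2 ≤ ⟪θ, u⟫ ^ 2 := by
  have hinner : 7 / 8 ≤ ⟪θ, u⟫ := by
    rw [inner_eq_one_sub_dist_sq_div_two hθ hu]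
    nlinarith [dist_nonneg (x := θ) (y := u)]
  nlinarith

theorem norm_sq_le_two_mul_iSup_inner_sq {ι : Type*} [Finite ι] (θ : ι → sphere (0 : E) 1)
    (hnet : ∀ u : sphere (0 : E) 1, ∃ i, dist u (θ i) < 1 / 2) (x : E) :
    ‖x‖ ^ 2 ≤ 2 * ⨆ i, |⟪(θ i : E), x⟫| ^ 2 := by
  rcases eq_or_ne x 0 with rfl | hx
  · simp
  have hnx : 0 < ‖x‖ := norm_pos_iff.2 hx
  let u : sphere (0 : E) 1 := ⟨‖x‖⁻¹ • x, by simp [norm_smul, hnx.ne']⟩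
  obtain ⟨i, hi⟩ := hnet u
  have hθi : 1 / 2 ≤ ⟪(θ i : E), ‖x‖⁻¹ • x⟫ ^ 2 :=
    one_half_le_inner_sq_of_dist_le (norm_eq_of_mem_sphere (θ i)) (norm_eq_of_mem_sphere u)
      (by rw [dist_comm]; exact hi.le)
  have hscale : ⟪(θ i : E), x⟫ ^ 2 = ‖x‖ ^ 2 * ⟪(θ i : E), ‖x‖⁻¹ • x⟫ ^ 2 := by
    rw [real_inner_smul_right]
    field_simp
  calc ‖x‖ ^ 2 ≤ 2 * ⟪(θ i : E), x⟫ ^ 2 := by nlinarith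
    _ = 2 * |⟪(θ i : E), x⟫| ^ 2 := by rw [sq_abs]
    _ ≤ 2 * ⨆ i, |⟪(θ i : E), x⟫| ^ 2 := by
      gcongr 2 * ?_
      exact le_ciSup (f := fun i => |⟪(θ i : E), x⟫| ^ 2) (finite_range _).bddAbove i

end InnerProductSpace

theorem statement5_general (k : ℕ) (S : Set (sphere (0 : Eucl k) 1))
    (hfull : sphM k Sᶜ = 0) :
    ∃ (F : ℕ) (θ : Fin F → sphere (0 : Eucl k) 1), (∀ i, θ i ∈ S) ∧
      ∀ x : Eucl k, ‖x‖ ^ 2 ≤ 2 * ⨆ i, |⟪(θ i : Eucl k), x⟫| ^ 2 := by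
  have hdense : Dense S := (sphM k).dense_of_ae (p := (· ∈ S)) (ae_iff.2 hfull)
  obtain ⟨t, htS, htfin, hnet⟩ :=
    hdense.exists_finite_subset_forall_exists_dist_lt (by norm_num : (0 : ℝ) < 1 / 2)
  obtain ⟨F, θ, rfl⟩ := htfin.fin_embedding
  refine ⟨F, θ, fun i => htS (mem_range_self i), norm_sq_le_two_mul_iSup_inner_sq θ fun u => ?_⟩
  obtain ⟨_, ⟨i, rfl⟩, hi⟩ := hnet u
  exact ⟨i, hi⟩

/-- From any Borel subset of the sphere of full spherical measure, one can
choose finitely many directions `θ(1), …, θ(F)` with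
`|x|² ≤ 2 maxᵢ |θ(i)ᵀx|²` for all `x ∈ ℝᵏ`. -/
theorem statement5 (k : ℕ) (S : Set (sphere (0 : Eucl k) 1)) (hS : MeasurableSet S)
    (hfull : sphM k Sᶜ = 0) :
    ∃ (F : ℕ) (θ : Fin F → sphere (0 : Eucl k) 1), (∀ i, θ i ∈ S) ∧
      ∀ x : Eucl k, ‖x‖ ^ 2 ≤ 2 * ⨆ i, |⟪(θ i : Eucl k), x⟫| ^ 2 :=
  statement5_general k S hfull

end
end

section
/- There exists a constant C (depending only on k) such that for all μ, ν ∈ P₂(ℝᵏ), κ ∫ |y|² ν(dy) ≤ C ( ∫ |x|² μ(dx) + SW₂(μ,ν)² ), where κ ∈ (0,1] is the constant with ∫_{S^{k-1}} θθᵀ dθ = κ I_k. -/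
open MeasureTheory ProbabilityTheory Metric Filter
open scoped ENNReal NNReal RealInnerProductSpace Topology

noncomputable section

/-
Integrating `t² ≤ 2 s² + 4 · ½ |s - t|²` against any coupling of `μ_θ` and `ν_θ` bounds the second
moment of `ν_θ` by `2 ∫ s² dμ_θ + 4 W₂(μ_θ, ν_θ)²`. Averaging over `θ ∈ S^{k-1}` and using
`∫ ⟪θ, y⟫² dθ = κ |y|²` gives `κ ∫ |y|² dν ≤ 2 κ ∫ |x|² dμ + 4 SW₂(μ, ν)²`, hence the claim
with `C = 4` since `κ ≤ 1`.
-/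

lemma prod_mem_couplings {E : Type*} [MeasurableSpace E] (μ ν : Measure E) [IsProbabilityMeasure μ]
    [IsProbabilityMeasure ν] : μ.prod ν ∈ couplings μ ν := by
  constructor <;> simp [Measure.map_fst_prod, Measure.map_snd_prod]

section Coupling

variable {E : Type*} [NormedAddCommGroup E] [MeasurableSpace E]

def secondMoment (μ : Measure E) : ℝ≥0∞ := ∫⁻ x, ENNReal.ofReal (‖x‖ ^ 2) ∂μ

lemma secondMoment_eq_lintegral_nnnorm_sq (μ : Measure E) :
    secondMoment μ = ∫⁻ x, (‖x‖₊ : ℝ≥0∞) ^ 2 ∂μ := by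
  refine lintegral_congr fun x => ?_
  rw [ENNReal.ofReal_pow (norm_nonneg x), ← coe_nnnorm x, ENNReal.ofReal_coe_nnreal]

lemma MemP2.secondMoment_ne_top {μ : Measure E} (hμ : MemP2 μ) : secondMoment μ ≠ ∞ := by
  rw [secondMoment_eq_lintegral_nnnorm_sq]
  exact hμ.2.ne

variable [OpensMeasurableSpace E]

lemma measurable_ofReal_norm_sq : Measurable fun x : E => ENNReal.ofReal (‖x‖ ^ 2) :=
  (measurable_norm.pow_const 2).ennreal_ofReal

lemma measurable_ofReal_norm_fst_sq :
    Measurable fun p : E × E => ENNReal.ofReal (‖p.1‖ ^ 2) :=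
  measurable_ofReal_norm_sq.comp measurable_fst

lemma toReal_secondMoment (μ : Measure E) : (secondMoment μ).toReal = ∫ x, ‖x‖ ^ 2 ∂μ := by
  rw [secondMoment, integral_eq_lintegral_of_nonneg_ae (.of_forall fun x => sq_nonneg _)
    (continuous_norm.pow 2).aestronglyMeasurable]

variable {μ ν : Measure E} {π : Measure (E × E)}

lemma secondMoment_eq_lintegral_fst (hπ : π ∈ couplings μ ν) :
    secondMoment μ = ∫⁻ p, ENNReal.ofReal (‖p.1‖ ^ 2) ∂π := by
  rw [secondMoment, ← hπ.1, lintegral_map measurable_ofReal_norm_sq measurable_fst]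

lemma secondMoment_eq_lintegral_snd (hπ : π ∈ couplings μ ν) :
    secondMoment ν = ∫⁻ p, ENNReal.ofReal (‖p.2‖ ^ 2) ∂π := by
  rw [secondMoment, ← hπ.2, lintegral_map measurable_ofReal_norm_sq measurable_snd]

lemma W2sq_le_secondMoment_add [IsProbabilityMeasure μ] [IsProbabilityMeasure ν] :
    W2sq μ ν ≤ secondMoment μ + secondMoment ν := by
  have hπ := prod_mem_couplings μ ν
  have hcost (p : E × E) : ENNReal.ofReal (‖p.1 - p.2‖ ^ 2 / 2)
      ≤ ENNReal.ofReal (‖p.1‖ ^ 2) + ENNReal.ofReal (‖p.2‖ ^ 2) := by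
    rw [← ENNReal.ofReal_add (sq_nonneg _) (sq_nonneg _)]
    refine ENNReal.ofReal_le_ofReal ?_
    nlinarith [norm_sub_le p.1 p.2, norm_nonneg (p.1 - p.2), sq_nonneg (‖p.1‖ - ‖p.2‖)]
  calc W2sq μ ν ≤ ∫⁻ p, ENNReal.ofReal (‖p.1 - p.2‖ ^ 2 / 2) ∂(μ.prod ν) := iInf₂_le _ hπ
    _ ≤ ∫⁻ p, (ENNReal.ofReal (‖p.1‖ ^ 2) + ENNReal.ofReal (‖p.2‖ ^ 2)) ∂(μ.prod ν) :=
        lintegral_mono hcost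
    _ = secondMoment μ + secondMoment ν := by
        rw [lintegral_add_left measurable_ofReal_norm_fst_sq,
          ← secondMoment_eq_lintegral_fst hπ, ← secondMoment_eq_lintegral_snd hπ]

lemma secondMoment_le_of_mem_couplings (hπ : π ∈ couplings μ ν) :
    secondMoment ν ≤ 2 * secondMoment μ + 4 * ∫⁻ p, ENNReal.ofReal (‖p.1 - p.2‖ ^ 2 / 2) ∂π := by
  have hpt (p : E × E) : ENNReal.ofReal (‖p.2‖ ^ 2)
      ≤ 2 * ENNReal.ofReal (‖p.1‖ ^ 2) + 4 * ENNReal.ofReal (‖p.1 - p.2‖ ^ 2 / 2) := by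
    rw [← ENNReal.ofReal_ofNat 2, ← ENNReal.ofReal_ofNat 4, ← ENNReal.ofReal_mul (by norm_num),
      ← ENNReal.ofReal_mul (by norm_num), ← ENNReal.ofReal_add (by positivity) (by positivity)]
    refine ENNReal.ofReal_le_ofReal ?_
    have := norm_le_norm_add_norm_sub' p.2 p.1
    rw [norm_sub_rev] at this
    nlinarith [norm_nonneg p.2, sq_nonneg (‖p.1‖ - ‖p.1 - p.2‖)]
  calc secondMoment ν = ∫⁻ p, ENNReal.ofReal (‖p.2‖ ^ 2) ∂π := secondMoment_eq_lintegral_snd hπ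
    _ ≤ ∫⁻ p, (2 * ENNReal.ofReal (‖p.1‖ ^ 2)
          + 4 * ENNReal.ofReal (‖p.1 - p.2‖ ^ 2 / 2)) ∂π := lintegral_mono hpt
    _ = 2 * secondMoment μ + 4 * ∫⁻ p, ENNReal.ofReal (‖p.1 - p.2‖ ^ 2 / 2) ∂π := by
        rw [lintegral_add_left (measurable_ofReal_norm_fst_sq.const_mul 2),
          lintegral_const_mul' _ _ (by norm_num), lintegral_const_mul' _ _ (by norm_num),
          secondMoment_eq_lintegral_fst hπ]

lemma secondMoment_le_two_mul_add_four_mul_W2sq :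
    secondMoment ν ≤ 2 * secondMoment μ + 4 * W2sq μ ν := by
  simp only [W2sq, ENNReal.mul_iInf_of_ne (a := 4) (by norm_num) (by norm_num), ENNReal.add_iInf]
  exact le_iInf₂ fun π hπ => secondMoment_le_of_mem_couplings hπ

end Coupling

section Sliced

variable {k : ℕ}

lemma sphM_univ_le_one (k : ℕ) : sphM k Set.univ ≤ 1 := by
  rw [sphM, Measure.smul_apply, smul_eq_mul]
  exact ENNReal.inv_mul_le_one _

instance (k : ℕ) : IsFiniteMeasure (sphM k) :=
  ⟨(sphM_univ_le_one k).trans_lt ENNReal.one_lt_top⟩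

lemma measurable_inner_sq_sphere :
    Measurable fun p : sphere (0 : Eucl k) 1 × Eucl k =>
      ENNReal.ofReal (⟪(p.1 : Eucl k), p.2⟫ ^ 2) :=
  ((continuous_subtype_val.comp continuous_fst).inner continuous_snd).pow 2
    |>.measurable.ennreal_ofReal

lemma measurable_inner_left (θ : Eucl k) : Measurable fun x : Eucl k => ⟪θ, x⟫ := by
  fun_prop

instance (θ : Eucl k) (ρ : Measure (Eucl k)) [IsProbabilityMeasure ρ] :
    IsProbabilityMeasure (projM θ ρ) :=
  Measure.isProbabilityMeasure_map (measurable_inner_left θ).aemeasurable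

lemma secondMoment_projM (θ : Eucl k) (ρ : Measure (Eucl k)) :
    secondMoment (projM θ ρ) = ∫⁻ x, ENNReal.ofReal (⟪θ, x⟫ ^ 2) ∂ρ := by
  rw [secondMoment, projM, lintegral_map measurable_ofReal_norm_sq (measurable_inner_left θ)]
  simp only [Real.norm_eq_abs, sq_abs]

lemma secondMoment_projM_le {θ : Eucl k} (hθ : ‖θ‖ ≤ 1) (ρ : Measure (Eucl k)) :
    secondMoment (projM θ ρ) ≤ secondMoment ρ := by
  rw [secondMoment_projM]
  refine lintegral_mono fun x => ENNReal.ofReal_le_ofReal ?_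
  have : ‖⟪θ, x⟫‖ ≤ ‖x‖ := (norm_inner_le_norm θ x).trans (mul_le_of_le_one_left (norm_nonneg x) hθ)
  exact sq_le_sq.2 (by rwa [abs_norm, ← Real.norm_eq_abs])

lemma SW2sq_le_secondMoment_add (μ ν : Measure (Eucl k)) [IsProbabilityMeasure μ]
    [IsProbabilityMeasure ν] : SW2sq μ ν ≤ secondMoment μ + secondMoment ν :=
  calc SW2sq μ ν ≤ ∫⁻ _ : sphere (0 : Eucl k) 1, (secondMoment μ + secondMoment ν) ∂(sphM k) := by
        refine lintegral_mono fun θ => ?_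
        have hθ : ‖(θ : Eucl k)‖ ≤ 1 := (norm_eq_of_mem_sphere θ).le
        exact W2sq_le_secondMoment_add.trans
          (add_le_add (secondMoment_projM_le hθ μ) (secondMoment_projM_le hθ ν))
    _ ≤ secondMoment μ + secondMoment ν := by
        rw [lintegral_const]
        exact mul_le_of_le_one_right' (sphM_univ_le_one k)

variable {κ : ℝ}

lemma lintegral_sphM_secondMoment_projM (hκ0 : 0 ≤ κ)
    (hκ : ∀ y : Eucl k, ∫ θ : sphere (0 : Eucl k) 1, ⟪(θ : Eucl k), y⟫ ^ 2 ∂(sphM k) = κ * ‖y‖ ^ 2)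
    (ρ : Measure (Eucl k)) [SFinite ρ] :
    ∫⁻ θ : sphere (0 : Eucl k) 1, secondMoment (projM θ ρ) ∂(sphM k)
      = ENNReal.ofReal κ * secondMoment ρ := by
  have hsphere (y : Eucl k) :
      ∫⁻ θ : sphere (0 : Eucl k) 1, ENNReal.ofReal (⟪(θ : Eucl k), y⟫ ^ 2) ∂(sphM k)
        = ENNReal.ofReal κ * ENNReal.ofReal (‖y‖ ^ 2) := by
    have hint : Integrable (fun θ : sphere (0 : Eucl k) 1 => ⟪(θ : Eucl k), y⟫ ^ 2) (sphM k) :=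
      ((continuous_subtype_val.inner continuous_const).pow 2).integrable_of_hasCompactSupport
        (.of_compactSpace _)
    rw [← ofReal_integral_eq_lintegral_ofReal hint (.of_forall fun θ => sq_nonneg _), hκ,
      ENNReal.ofReal_mul hκ0]
  simp only [secondMoment_projM]
  rw [lintegral_lintegral_swap measurable_inner_sq_sphere.aemeasurable]
  simp only [hsphere, lintegral_const_mul' _ _ ENNReal.ofReal_ne_top, secondMoment]

lemma ofReal_mul_secondMoment_le (hκ0 : 0 ≤ κ)
    (hκ : ∀ y : Eucl k, ∫ θ : sphere (0 : Eucl k) 1, ⟪(θ : Eucl k), y⟫ ^ 2 ∂(sphM k) = κ * ‖y‖ ^ 2)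
    (μ ν : Measure (Eucl k)) [SFinite μ] [SFinite ν] :
    ENNReal.ofReal κ * secondMoment ν
      ≤ 2 * (ENNReal.ofReal κ * secondMoment μ) + 4 * SW2sq μ ν := by
  have hmeas : Measurable fun θ : sphere (0 : Eucl k) 1 => secondMoment (projM θ μ) := by
    simpa only [secondMoment_projM] using measurable_inner_sq_sphere.lintegral_prod_right'
  rw [← lintegral_sphM_secondMoment_projM hκ0 hκ, ← lintegral_sphM_secondMoment_projM hκ0 hκ,
    SW2sq, ← lintegral_const_mul _ hmeas, ← lintegral_const_mul' _ _ (by norm_num),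
    ← lintegral_add_left (hmeas.const_mul 2)]
  exact lintegral_mono fun θ => secondMoment_le_two_mul_add_four_mul_W2sq

end Sliced

/-- `κ ∫ |y|² ν(dy) ≤ C (∫ |x|² μ(dx) + SW₂(μ,ν)²)` for a constant `C`
depending only on `k`, where `κ` is the constant with `∫_{S^{k-1}} θθᵀ dθ = κ Iₖ`. -/
theorem statement8 (k : ℕ) (κ : ℝ) (hκ0 : 0 < κ) (hκ1 : κ ≤ 1)
    (hκ : ∀ x y : Eucl k,
      (∫ θ : sphere (0 : Eucl k) 1, ⟪(θ : Eucl k), x⟫ * ⟪(θ : Eucl k), y⟫ ∂(sphM k)) =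
        κ * ⟪x, y⟫) :
    ∃ C : ℝ, 0 < C ∧ ∀ μ ν : Measure (Eucl k), MemP2 μ → MemP2 ν →
      κ * ∫ y, ‖y‖ ^ 2 ∂ν ≤ C * ((∫ x, ‖x‖ ^ 2 ∂μ) + (SW2sq μ ν).toReal) := by
  refine ⟨4, by norm_num, fun μ ν hμ hν => ?_⟩
  have := hμ.1
  have := hν.1
  have hsq (y : Eucl k) : ∫ θ : sphere (0 : Eucl k) 1, ⟪(θ : Eucl k), y⟫ ^ 2 ∂(sphM k)
      = κ * ‖y‖ ^ 2 := by
    simpa only [sq, real_inner_self_eq_norm_sq] using hκ y y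
  have hSW : SW2sq μ ν ≠ ∞ := ne_top_of_le_ne_top
    (ENNReal.add_ne_top.2 ⟨hμ.secondMoment_ne_top, hν.secondMoment_ne_top⟩)
    (SW2sq_le_secondMoment_add μ ν)
  have hκμ : ENNReal.ofReal κ * secondMoment μ ≤ secondMoment μ :=
    mul_le_of_le_one_left' (ENNReal.ofReal_le_one.2 hκ1)
  have key : ENNReal.ofReal κ * secondMoment ν ≤ 4 * (secondMoment μ + SW2sq μ ν) :=
    calc ENNReal.ofReal κ * secondMoment ν
        ≤ 2 * (ENNReal.ofReal κ * secondMoment μ) + 4 * SW2sq μ ν :=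
          ofReal_mul_secondMoment_le hκ0.le hsq μ ν
      _ ≤ 4 * (secondMoment μ + SW2sq μ ν) := by
          rw [mul_add]
          exact add_le_add (mul_le_mul' (by norm_num : (2 : ℝ≥0∞) ≤ 4) hκμ) le_rfl
  have := ENNReal.toReal_mono (by finiteness [hμ.secondMoment_ne_top]) key
  simpa [ENNReal.toReal_add hμ.secondMoment_ne_top hSW, toReal_secondMoment, hκ0.le] using this

end
end
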